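/- arXiv:1604.06429 — 6 statements merged into one kernel-verified Lean document; each statement's English description precedes it below -/
import Mathlib

section
/- Let a ∈ ℂ with |a| = 1, and let R(a) be the 4×4 complex matrix, with rows and columns indexed by Fin 2 × Fin 2 in lexicographic order, given by R(a) = [[a, 0, 0, 0], [0, 0, a⁻¹, 0], [0, a⁻¹, a − a⁻³, 0], [0, 0, 0, a]]. Then: (i) R(a) satisfies the Yang–Baxter equation (R ⊗ I₂)(I₂ ⊗ R)(R ⊗ I₂) = (I₂ ⊗ R)(R ⊗ I₂)(I₂ ⊗ R) as 8×8 matrices (Kronecker products, indexed by Fin 2 × Fin 2 × Fin 2); and (ii) R(a) is unitary if and only if a⁴ = 1, i.e. if and only if a ∈ {1, −1, i, −i}. -/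
open Matrix Complex

/-- Lexicographic encoding of `Fin 2 × Fin 2` into `Fin 4`. -/
def enc22 : Fin 2 × Fin 2 → Fin 4 :=
  fun p => ⟨2 * p.1.val + p.2.val, by have := p.1.isLt; have := p.2.isLt; omega⟩

/-- The `4 × 4` matrix `R(a)`, with rows and columns indexed by `Fin 2 × Fin 2`
in lexicographic order. -/
noncomputable def RYB (a : ℂ) : Matrix (Fin 2 × Fin 2) (Fin 2 × Fin 2) ℂ :=
  fun p q =>
    (!![a, 0,   0,            0;
        0, 0,   a⁻¹,          0;
        0, a⁻¹, a - a⁻¹ ^ 3,  0;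
        0, 0,   0,            a] : Matrix (Fin 4) (Fin 4) ℂ) (enc22 p) (enc22 q)

/-- `R(a) ⊗ I₂`, reassociated to a matrix indexed by `Fin 2 × Fin 2 × Fin 2`. -/
noncomputable def RYB12 (a : ℂ) : Matrix (Fin 2 × Fin 2 × Fin 2) (Fin 2 × Fin 2 × Fin 2) ℂ :=
  Matrix.reindex (Equiv.prodAssoc (Fin 2) (Fin 2) (Fin 2)) (Equiv.prodAssoc (Fin 2) (Fin 2) (Fin 2))
    (Matrix.kroneckerMap (· * ·) (RYB a) (1 : Matrix (Fin 2) (Fin 2) ℂ))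

/-- `I₂ ⊗ R(a)`, a matrix indexed by `Fin 2 × Fin 2 × Fin 2`. -/
noncomputable def RYB23 (a : ℂ) : Matrix (Fin 2 × Fin 2 × Fin 2) (Fin 2 × Fin 2 × Fin 2) ℂ :=
  Matrix.kroneckerMap (· * ·) (1 : Matrix (Fin 2) (Fin 2) ℂ) (RYB a)

/-!
`R(a)` is `a⁻¹` times the standard Hecke R-matrix at `q = a²`, i.e. a member of the family
`[[x,0,0,0],[0,0,y,0],[0,y,z,0],[0,0,0,x]]` with `x (x - z) = y²`. Written in index form, the
Yang–Baxter equation for this family reduces entrywise to polynomial identities modulo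
`x (x - z) = y²`. Such a matrix is unitary iff `x` and `y` are unimodular and `z = 0`, and for
`R(a)` the last condition reads `a = a⁻³`.
-/

section YangBaxter

variable {α ι : Type*} [CommRing α] [DecidableEq ι]

def kron12 (M : Matrix (ι × ι) (ι × ι) α) : Matrix (ι × ι × ι) (ι × ι × ι) α :=
  reindex (Equiv.prodAssoc ι ι ι) (Equiv.prodAssoc ι ι ι) (kroneckerMap (· * ·) M 1)

def kron23 (M : Matrix (ι × ι) (ι × ι) α) : Matrix (ι × ι × ι) (ι × ι × ι) α :=
  kroneckerMap (· * ·) 1 M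

variable [Fintype ι]

def IsYangBaxter (M : Matrix (ι × ι) (ι × ι) α) : Prop :=
  kron12 M * kron23 M * kron12 M = kron23 M * kron12 M * kron23 M

theorem kron12_mul_kron23_mul_kron12_apply (A B C : Matrix (ι × ι) (ι × ι) α) (i j k l m n : ι) :
    (kron12 A * kron23 B * kron12 C) (i, j, k) (l, m, n) =
      ∑ p, ∑ q, ∑ r, A (i, j) (p, r) * B (r, k) (q, n) * C (p, q) (l, m) := by
  simp [kron12, kron23, mul_apply, Fintype.sum_prod_type, one_apply, Finset.sum_mul]

theorem kron23_mul_kron12_mul_kron23_apply (A B C : Matrix (ι × ι) (ι × ι) α) (i j k l m n : ι) :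
    (kron23 A * kron12 B * kron23 C) (i, j, k) (l, m, n) =
      ∑ p, ∑ q, ∑ r, A (j, k) (r, q) * B (i, r) (l, p) * C (p, q) (m, n) := by
  simp [kron12, kron23, mul_apply, Fintype.sum_prod_type, one_apply, Finset.sum_mul]

end YangBaxter

section BraidR

variable {α : Type*}

def braidR [Zero α] (x y z : α) : Matrix (Fin 2 × Fin 2) (Fin 2 × Fin 2) α :=
  fun p q => !![x, 0, 0, 0; 0, 0, y, 0; 0, y, z, 0; 0, 0, 0, x] (enc22 p) (enc22 q)

theorem isYangBaxter_braidR [CommRing α] {x y z : α} (h : x * (x - z) = y ^ 2) :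
    IsYangBaxter (braidR x y z) := by
  ext ⟨i, j, k⟩ ⟨l, m, n⟩
  rw [kron12_mul_kron23_mul_kron12_apply, kron23_mul_kron12_mul_kron23_apply]
  simp only [Fin.sum_univ_two]
  fin_cases i <;> fin_cases j <;> fin_cases k <;> fin_cases l <;> fin_cases m <;> fin_cases n <;>
    simp [braidR, enc22] <;> grind

theorem braidR_mem_unitaryGroup_iff [CommRing α] [StarRing α] {x y z : α} :
    braidR x y z ∈ unitaryGroup (Fin 2 × Fin 2) α ↔ x * star x = 1 ∧ y * star y = 1 ∧ z = 0 := by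
  rw [mem_unitaryGroup_iff, ← Matrix.ext_iff]
  simp only [mul_apply, Fintype.sum_prod_type, Fin.sum_univ_two, star_apply]
  constructor
  · intro h
    have hx : x * star x = 1 := by simpa [braidR, enc22] using h (0, 0) (0, 0)
    have hy : y * star y = 1 := by simpa [braidR, enc22] using h (0, 1) (0, 1)
    have hyz : y * star z = 0 := by simpa [braidR, enc22] using h (0, 1) (1, 0)
    refine ⟨hx, hy, ?_⟩
    rw [← star_eq_zero, ← one_mul (star z), ← hy, mul_comm y, mul_assoc, hyz, mul_zero]
  · rintro ⟨hx, hy, rfl⟩ ⟨i, j⟩ ⟨k, l⟩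
    fin_cases i <;> fin_cases j <;> fin_cases k <;> fin_cases l <;>
      simp [braidR, enc22, hx, hy]

end BraidR

theorem RYB_eq_braidR (a : ℂ) : RYB a = braidR a a⁻¹ (a - a⁻¹ ^ 3) := rfl

theorem sub_inv_pow_three_eq_zero_iff {K : Type*} [Field K] {a : K} (ha : a ≠ 0) :
    a - a⁻¹ ^ 3 = 0 ↔ a ^ 4 = 1 := by
  rw [sub_eq_zero, inv_pow, eq_comm, inv_eq_iff_eq_inv]
  field_simp

theorem Complex.pow_four_eq_one_iff {a : ℂ} : a ^ 4 = 1 ↔ a = 1 ∨ a = -1 ∨ a = I ∨ a = -I := by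
  have factor : a ^ 4 - 1 = (a - 1) * (a + 1) * (a - I) * (a + I) := by
    linear_combination (a ^ 2 - 1) * I_sq
  rw [← sub_eq_zero, factor]
  simp only [mul_eq_zero, sub_eq_zero, add_eq_zero_iff_eq_neg, or_assoc]

theorem RYB_yang_baxter_and_unitary_iff (a : ℂ) (ha : ‖a‖ = 1) :
    (RYB12 a * RYB23 a * RYB12 a = RYB23 a * RYB12 a * RYB23 a) ∧
    (RYB a ∈ Matrix.unitaryGroup (Fin 2 × Fin 2) ℂ ↔ a ^ 4 = 1) ∧
    (a ^ 4 = 1 ↔ a = 1 ∨ a = -1 ∨ a = Complex.I ∨ a = -Complex.I) := by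
  have ha0 : a ≠ 0 := norm_ne_zero_iff.mp (ha ▸ one_ne_zero)
  have hstar : star a = a⁻¹ := (inv_eq_conj ha).symm
  refine ⟨?_, ?_, Complex.pow_four_eq_one_iff⟩
  · have hecke : a * (a - (a - a⁻¹ ^ 3)) = a⁻¹ ^ 2 := by
      field_simp
      ring
    exact isYangBaxter_braidR hecke
  · rw [RYB_eq_braidR, braidR_mem_unitaryGroup_iff, star_inv₀, hstar, inv_inv,
      mul_inv_cancel₀ ha0, inv_mul_cancel₀ ha0, sub_inv_pow_three_eq_zero_iff ha0]
    simp only [true_and]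
end

section
/- Let n ≥ 2, let s ∈ ℂ with |s| = 1, and set t = s². For 1 ≤ i ≤ n−1 let ρ(σ_i) be the (n−1)×(n−1) reduced Burau matrix: the matrix equal to the identity except in row i, where its entries are ρ(σ_i)_{i,i−1} = 1 (when i ≥ 2), ρ(σ_i)_{i,i} = −t, and ρ(σ_i)_{i,i+1} = t (when i ≤ n−2); this is the matrix of the restriction of the unreduced Burau matrix B_i(t) to the invariant subspace span{v_1,…,v_{n−1}} in the basis (v_1,…,v_{n−1}), where v_j = −t·e_j + e_{j+1}. Let P = diag(1, s, s², …, s^{n−2}) and let J be the (n−1)×(n−1) tridiagonal Hermitian matrix with diagonal entries s + s⁻¹ and entries −1 immediately above and below the diagonal. Set ρ_s(σ_i) = P·ρ(σ_i)·P⁻¹. Then for every 1 ≤ i ≤ n−1, (ρ_s(σ_i))† · J · ρ_s(σ_i) = J, where † denotes conjugate transpose; that is, the conjugated reduced Burau representation is unitary with respect to the Hermitian form J. -/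
open Matrix

/-- The reduced Burau matrix of the braid generator acting on strands `i, i+1`
(0-indexed `i`, so this is the generator `σ_{i+1}` in 1-based labelling): the
`(n-1) × (n-1)` matrix equal to the identity except in row `i`, where the entries are
`1` in column `i-1`, `-t` in column `i`, and `t` in column `i+1`. -/
noncomputable def redBurau (n : ℕ) (t : ℂ) (i : ℕ) :
    Matrix (Fin (n - 1)) (Fin (n - 1)) ℂ :=
  fun r c =>
    if (r : ℕ) = i then
      if (c : ℕ) + 1 = i then 1
      else if (c : ℕ) = i then -t
      else if (c : ℕ) = i + 1 then t
      else 0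
    else if r = c then 1 else 0

/-- The diagonal matrix `P = diag(1, s, s², …, s^{n-2})`. -/
noncomputable def Pmat (n : ℕ) (s : ℂ) : Matrix (Fin (n - 1)) (Fin (n - 1)) ℂ :=
  Matrix.diagonal fun j => s ^ (j : ℕ)

/-- The tridiagonal Hermitian matrix `J` with diagonal entries `s + s⁻¹` and
entries `-1` immediately above and below the diagonal. -/
noncomputable def Jmat (n : ℕ) (s : ℂ) : Matrix (Fin (n - 1)) (Fin (n - 1)) ℂ :=
  fun r c =>
    if (r : ℕ) = (c : ℕ) then s + s⁻¹
    else if (r : ℕ) + 1 = (c : ℕ) ∨ (c : ℕ) + 1 = (r : ℕ) then -1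
    else 0

/-! Conjugated by `P`, the generator `ρ(σ_i)` becomes the pseudo-reflection
`v ↦ v - s (e_i† J v) e_i`. For Hermitian `J`, the pseudo-reflection `v ↦ v - a (e† J v) e`
is `J`-unitary as soon as `a + ā = |a|² (e† J e)`; here `a = s`, `|s| = 1` and
`e_i† J e_i = s + s⁻¹ = s + s̄`. -/

section PseudoReflection

variable {R ι : Type*} [CommRing R] [StarRing R] [Fintype ι] [DecidableEq ι]

def Matrix.pseudoReflection (J : Matrix ι ι R) (e : ι → R) (a : R) : Matrix ι ι R :=
  1 - a • vecMulVec e (star e ᵥ* J)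

theorem Matrix.conjTranspose_pseudoReflection_mul_mul_self {J : Matrix ι ι R}
    (hJ : J.IsHermitian) (e : ι → R) {a : R}
    (ha : a + star a = star a * a * (star e ⬝ᵥ J *ᵥ e)) :
    (pseudoReflection J e a)ᴴ * J * pseudoReflection J e a = J := by
  have hstar_row : star (star e ᵥ* J) = J *ᵥ e := by rw [star_vecMul, hJ.eq, star_star]
  have hleft : J * vecMulVec e (star e ᵥ* J) = vecMulVec (J *ᵥ e) (star e ᵥ* J) :=
    mul_vecMulVec _ _ _
  have hright : vecMulVec (J *ᵥ e) (star e) * J = vecMulVec (J *ᵥ e) (star e ᵥ* J) :=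
    vecMulVec_mul _ _ _
  have hmid : vecMulVec (J *ᵥ e) (star e ᵥ* J) * vecMulVec e (star e ᵥ* J) =
      (star e ⬝ᵥ J *ᵥ e) • vecMulVec (J *ᵥ e) (star e ᵥ* J) := by
    rw [vecMulVec_mul_vecMulVec, ← dotProduct_mulVec, vecMulVec_smul]
  rw [pseudoReflection, conjTranspose_sub, conjTranspose_one, conjTranspose_smul,
    conjTranspose_vecMulVec, hstar_row]
  simp only [sub_mul, mul_sub, Matrix.one_mul, Matrix.mul_one, smul_mul, Matrix.mul_smul, hleft,
    hright, hmid, smul_smul]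
  linear_combination (norm := module) -(ha • vecMulVec (J *ᵥ e) (star e ᵥ* J))

end PseudoReflection

section BurauMatrices

variable {n : ℕ} {s : ℂ}

theorem Pmat_inv (hs : s ≠ 0) :
    (Pmat n s)⁻¹ = diagonal fun j : Fin (n - 1) => (s ^ (j : ℕ))⁻¹ := by
  refine inv_eq_left_inv ?_
  rw [Pmat, diagonal_mul_diagonal, ← diagonal_one]
  congr 1
  funext j
  exact inv_mul_cancel₀ (pow_ne_zero _ hs)

theorem Pmat_mul_redBurau_mul_inv (hs : s ≠ 0) {i : ℕ} (hi : i < n - 1) :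
    Pmat n s * redBurau n (s ^ 2) i * (Pmat n s)⁻¹ =
      pseudoReflection (Jmat n s) (Pi.single ⟨i, hi⟩ 1) s := by
  ext ⟨r, hr⟩ ⟨c, hc⟩
  rw [Pmat_inv hs, Pmat, mul_diagonal, diagonal_mul]
  simp only [pseudoReflection, Pi.star_single, star_one, single_one_vecMul, redBurau, Jmat,
    Matrix.sub_apply, one_apply, Matrix.smul_apply, vecMulVec_apply, row_apply, Pi.single_apply,
    Fin.ext_iff, smul_eq_mul]
  split_ifs <;> first | omega | (subst_vars; field_simp; ring)

theorem Jmat_isHermitian (hs : star s = s⁻¹) : (Jmat n s).IsHermitian := by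
  ext r c
  simp only [conjTranspose_apply, Jmat]
  split_ifs <;> first | omega | simp [hs, add_comm]

end BurauMatrices

theorem reduced_burau_J_unitary_general (n : ℕ) (s : ℂ) (hs : ‖s‖ = 1) :
    ∀ i : ℕ, i < n - 1 →
      (Pmat n s * redBurau n (s ^ 2) i * (Pmat n s)⁻¹)ᴴ * Jmat n s *
        (Pmat n s * redBurau n (s ^ 2) i * (Pmat n s)⁻¹) = Jmat n s := by
  intro i hi
  have hs0 : s ≠ 0 := norm_ne_zero_iff.mp (hs ▸ one_ne_zero)
  have hstar : star s = s⁻¹ := (Complex.inv_eq_conj hs).symm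
  rw [Pmat_mul_redBurau_mul_inv hs0 hi]
  refine conjTranspose_pseudoReflection_mul_mul_self (Jmat_isHermitian hstar) _ ?_
  simp [Jmat, hstar, inv_mul_cancel₀ hs0]

/-- For `|s| = 1` and `t = s²`, the conjugated reduced Burau matrices
`ρ_s(σ_i) = P · ρ(σ_i) · P⁻¹` are unitary with respect to the Hermitian form `J`:
`ρ_s(σ_i)† · J · ρ_s(σ_i) = J`. -/
theorem reduced_burau_J_unitary (n : ℕ) (hn : 2 ≤ n) (s : ℂ) (hs : ‖s‖ = 1) :
    ∀ i : ℕ, i < n - 1 →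
      (Pmat n s * redBurau n (s ^ 2) i * (Pmat n s)⁻¹)ᴴ * Jmat n s *
        (Pmat n s * redBurau n (s ^ 2) i * (Pmat n s)⁻¹) = Jmat n s :=
  reduced_burau_J_unitary_general n s hs
end

section
/- Let n ≥ 1 and let A be an n×n complex matrix. Suppose there exist a column vector w ∈ ℂⁿ and a row vector u ∈ ℂⁿ such that A·w = 0, u·A = 0, and all coordinates of w and of u are nonzero. For indices i, j, let A(i,j) denote the (n−1)×(n−1) minor of A obtained by deleting row i and column j. Then the quantity (−1)^{i+j} · det(A(i,j)) / (u_i · w_j) is independent of i and j; that is, for all indices i, j, i′, j′: (−1)^{i+j} · det(A(i,j)) / (u_i · w_j) = (−1)^{i′+j′} · det(A(i′,j′)) / (u_{i′} · w_{j′}). -/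
/-!
Since `A` kills the nonzero vector `w`, `det A = 0`, so `A * adj A = adj A * A = 0`: the columns
of `adj A` lie in the kernel of `A` and its rows in the left kernel. If `adj A ≠ 0`, some `n × n`
minor of `A` is nonsingular, which forces both kernels to be lines, spanned by `w` and `u`.
Hence `adj A = c • w uᵀ` for a scalar `c`, and since
`adj A j i = (-1)^(i+j) det A(i,j)`, every ratio in the statement equals `c`.
-/

open Matrix

namespace Matrix

variable {R : Type*} [CommRing R]

theorem mulVec_adjugate_col_eq_zero {ι : Type*} [Fintype ι] [DecidableEq ι]
    (A : Matrix ι ι R) (hA : A.det = 0) (q : ι) : A *ᵥ (fun p => adjugate A p q) = 0 := by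
  funext k
  simpa [hA, mul_apply, mulVec, dotProduct] using congrFun (congrFun (mul_adjugate A) k) q

variable [IsDomain R]

theorem eq_zero_of_mulVec_eq_zero_of_apply_eq_zero {m : Type*} {n : ℕ}
    (B : Matrix m (Fin (n + 1)) R) (f : Fin n → m) (p : Fin (n + 1))
    (hB : (B.submatrix f p.succAbove).det ≠ 0) {v : Fin (n + 1) → R}
    (hv : B *ᵥ v = 0) (hvp : v p = 0) : v = 0 := by
  have hsub : B.submatrix f p.succAbove *ᵥ (v ∘ p.succAbove) = 0 := by
    funext r
    have h := congrFun hv (f r)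
    rwa [mulVec, dotProduct, Fin.sum_univ_succAbove _ p, hvp, mul_zero, zero_add] at h
  have hzero : v ∘ p.succAbove = 0 := by
    by_contra hne
    exact hB (exists_mulVec_eq_zero_iff.mp ⟨_, hne, hsub⟩)
  funext q
  rcases eq_or_ne q p with rfl | hq
  · exact hvp
  · obtain ⟨r, rfl⟩ := Fin.exists_succAbove_eq hq
    exact congrFun hzero r

theorem smul_eq_smul_of_mulVec_eq_zero {m : Type*} {n : ℕ}
    (B : Matrix m (Fin (n + 1)) R) (f : Fin n → m) (p : Fin (n + 1))
    (hB : (B.submatrix f p.succAbove).det ≠ 0) {v w : Fin (n + 1) → R}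
    (hv : B *ᵥ v = 0) (hw : B *ᵥ w = 0) : w p • v = v p • w := by
  refine sub_eq_zero.mp (eq_zero_of_mulVec_eq_zero_of_apply_eq_zero B f p hB ?_ ?_)
  · rw [mulVec_sub, mulVec_smul, mulVec_smul, hv, hw, smul_zero, smul_zero, sub_zero]
  · simp only [Pi.sub_apply, Pi.smul_apply, smul_eq_mul, mul_comm, sub_self]

theorem mul_adjugate_apply_eq_of_mulVec_eq_zero {n : ℕ}
    (A : Matrix (Fin (n + 1)) (Fin (n + 1)) R) {w : Fin (n + 1) → R}
    (hw : A *ᵥ w = 0) (hw0 : w ≠ 0) {p₀ q₀ : Fin (n + 1)} (hadj : adjugate A p₀ q₀ ≠ 0)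
    (p q : Fin (n + 1)) : w p₀ * adjugate A p q = adjugate A p₀ q * w p := by
  have hA : A.det = 0 := exists_mulVec_eq_zero_iff.mp ⟨w, hw0, hw⟩
  have hminor : (A.submatrix q₀.succAbove p₀.succAbove).det ≠ 0 := by
    rw [adjugate_fin_succ_eq_det_submatrix] at hadj
    exact right_ne_zero_of_mul hadj
  exact congrFun (smul_eq_smul_of_mulVec_eq_zero A q₀.succAbove p₀ hminor
    (mulVec_adjugate_col_eq_zero A hA q) hw) p

theorem exists_adjugate_eq_smul_vecMulVec {K : Type*} [Field K] {n : ℕ}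
    (A : Matrix (Fin (n + 1)) (Fin (n + 1)) K) {w u : Fin (n + 1) → K}
    (hw : A *ᵥ w = 0) (hu : u ᵥ* A = 0) (hw0 : w ≠ 0) (hu0 : u ≠ 0) :
    ∃ c : K, adjugate A = c • vecMulVec w u := by
  by_cases h : adjugate A = 0
  · exact ⟨0, by rw [h, zero_smul]⟩
  obtain ⟨p₀, q₀, hadj⟩ : ∃ p q, adjugate A p q ≠ 0 := by
    by_contra! hc
    exact h (ext hc)
  have hcol := mul_adjugate_apply_eq_of_mulVec_eq_zero A hw hw0 hadj
  have hrow := mul_adjugate_apply_eq_of_mulVec_eq_zero Aᵀ (by rwa [mulVec_transpose]) hu0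
    (p₀ := q₀) (q₀ := p₀) (by rwa [← adjugate_transpose, transpose_apply])
  simp only [← adjugate_transpose, transpose_apply] at hrow
  have hwp₀ : w p₀ ≠ 0 := fun h0 => hw0 <| funext fun p => by
    simpa [h0, hadj] using hcol p q₀
  have huq₀ : u q₀ ≠ 0 := fun h0 => hu0 <| funext fun q => by
    simpa [h0, hadj] using hrow q p₀
  refine ⟨adjugate A p₀ q₀ / (w p₀ * u q₀), ext fun p q => ?_⟩
  rw [Matrix.smul_apply, vecMulVec_apply, smul_eq_mul, div_mul_eq_mul_div,
    eq_div_iff (by simp [*])]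
  linear_combination u q₀ * hcol p q + w p * hrow q p₀

end Matrix

/-- Suppose the `(n+1) × (n+1)` complex matrix `A` annihilates a column vector `w`
(`A·w = 0`) and is annihilated by a row vector `u` (`u·A = 0`), all of whose
coordinates are nonzero.  Then `(-1)^{i+j} · det(A(i,j)) / (u_i · w_j)` is independent
of `i` and `j`, where `A(i,j)` is the minor obtained by deleting row `i` and
column `j`. -/
theorem minor_ratio_independent (n : ℕ) (A : Matrix (Fin (n + 1)) (Fin (n + 1)) ℂ)
    (w u : Fin (n + 1) → ℂ)
    (hw : A.mulVec w = 0) (hu : Matrix.vecMul u A = 0)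
    (hw0 : ∀ j, w j ≠ 0) (hu0 : ∀ i, u i ≠ 0) :
    ∀ i j i' j' : Fin (n + 1),
      (-1 : ℂ) ^ ((i : ℕ) + (j : ℕ)) *
          (A.submatrix i.succAbove j.succAbove).det / (u i * w j) =
      (-1 : ℂ) ^ ((i' : ℕ) + (j' : ℕ)) *
          (A.submatrix i'.succAbove j'.succAbove).det / (u i' * w j') := by
  obtain ⟨c, hc⟩ := exists_adjugate_eq_smul_vecMulVec A hw hu
    (fun h => hw0 0 (congrFun h 0)) (fun h => hu0 0 (congrFun h 0))
  have ratio_eq (i j : Fin (n + 1)) :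
      (-1 : ℂ) ^ ((i : ℕ) + (j : ℕ)) * (A.submatrix i.succAbove j.succAbove).det
        / (u i * w j) = c := by
    rw [← adjugate_fin_succ_eq_det_submatrix, hc, Matrix.smul_apply, vecMulVec_apply,
      smul_eq_mul, div_eq_iff (mul_ne_zero (hu0 i) (hw0 j))]
    ring
  intro i j i' j'
  rw [ratio_eq, ratio_eq]
end

section
/- Let ξ = e^{2πi/5} and let φ = (1 + √5)/2 be the golden ratio. Define the 2×2 complex matrices ρ(σ₁) = [[ξ⁻², 0], [0, −ξ⁻¹]] and ρ(σ₂) = [[φ⁻¹·ξ², −φ^{−1/2}·ξ], [−φ^{−1/2}·ξ, −φ⁻¹]]. Then: (a) ρ(σ₁) and ρ(σ₂) are both unitary; (b) they satisfy the braid relation ρ(σ₁)·ρ(σ₂)·ρ(σ₁) = ρ(σ₂)·ρ(σ₁)·ρ(σ₂); and (c) ρ(σ₂) = F·ρ(σ₁)·F where F = [[φ⁻¹, φ^{−1/2}], [φ^{−1/2}, −φ⁻¹]] (note F² = I). Hence σ₁ ↦ ρ(σ₁), σ₂ ↦ ρ(σ₂) defines a unitary representation of the three-strand braid group B₃ (the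 Jones/Fibonacci representation ρ_{3,τ⊗³,τ}). -/
open Matrix

/-- `ξ = e^{2πi/5}`. -/
noncomputable def ξ : ℂ := Complex.exp (2 * Real.pi * Complex.I / 5)

/-- The golden ratio `φ = (1 + √5)/2`. -/
noncomputable def goldenφ : ℝ := (1 + Real.sqrt 5) / 2

/-- `ρ(σ₁) = [[ξ⁻², 0], [0, -ξ⁻¹]]`. -/
noncomputable def rho1 : Matrix (Fin 2) (Fin 2) ℂ :=
  !![ξ ^ (-2 : ℤ), 0; 0, -ξ ^ (-1 : ℤ)]

/-- `ρ(σ₂) = [[φ⁻¹ ξ², -φ^{-1/2} ξ], [-φ^{-1/2} ξ, -φ⁻¹]]`. -/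
noncomputable def rho2 : Matrix (Fin 2) (Fin 2) ℂ :=
  !![(goldenφ : ℂ)⁻¹ * ξ ^ 2, -((Real.sqrt goldenφ⁻¹ : ℝ) : ℂ) * ξ;
     -((Real.sqrt goldenφ⁻¹ : ℝ) : ℂ) * ξ, -(goldenφ : ℂ)⁻¹]

/-- The Fibonacci `F`-matrix `F = [[φ⁻¹, φ^{-1/2}], [φ^{-1/2}, -φ⁻¹]]`. -/
noncomputable def Fmat : Matrix (Fin 2) (Fin 2) ℂ :=
  !![(goldenφ : ℂ)⁻¹, ((Real.sqrt goldenφ⁻¹ : ℝ) : ℂ);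
     ((Real.sqrt goldenφ⁻¹ : ℝ) : ℂ), -(goldenφ : ℂ)⁻¹]

lemma star_fin_two (a b c d : ℂ) :
    star !![a, b; c, d] = !![star a, star c; star b, star d] := by
  ext i j
  fin_cases i <;> fin_cases j <;> simp [Matrix.star_apply]

/-- The matrices `ρ(σ₁)`, `ρ(σ₂)` are unitary, satisfy the braid relation, and
`ρ(σ₂) = F·ρ(σ₁)·F`; hence they define the unitary Jones/Fibonacci representation
`ρ_{3,τ⊗³,τ}` of the three-strand braid group `B₃`. -/
theorem fibonacci_rep_of_B3 :
    rho1 ∈ Matrix.unitaryGroup (Fin 2) ℂ ∧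
    rho2 ∈ Matrix.unitaryGroup (Fin 2) ℂ ∧
    rho1 * rho2 * rho1 = rho2 * rho1 * rho2 ∧
    rho2 = Fmat * rho1 * Fmat := by
  have hx5 : ξ ^ 5 = 1 := by
    rw [ξ, ← Complex.exp_nat_mul,
      show (5:ℕ) * (2 * (Real.pi:ℂ) * Complex.I / 5) = 2*(Real.pi:ℂ)*Complex.I by
        push_cast; ring]
    exact Complex.exp_two_pi_mul_I
  have hx0 : ξ ≠ 0 := Complex.exp_ne_zero _
  have hconj : (starRingEnd ℂ) ξ = ξ⁻¹ := by
    rw [ξ, ← Complex.exp_conj, ← Complex.exp_neg]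
    congr 1
    simp only [map_div₀, _root_.map_mul, Complex.conj_I, Complex.conj_ofReal, map_ofNat]
    ring
  have hinv : ξ⁻¹ = ξ ^ 4 := by
    field_simp
    linear_combination -hx5
  have hconj4 : (starRingEnd ℂ) ξ = ξ ^ 4 := by rw [hconj, hinv]
  have hm1 : ξ ^ (-1 : ℤ) = ξ ^ 4 := by rw [_root_.zpow_neg, zpow_one, hinv]
  have hm2 : ξ ^ (-2 : ℤ) = ξ ^ 3 := by
    have h : ξ ^ 2 * ξ ^ 3 = 1 := by linear_combination hx5
    rw [show (-2 : ℤ) = -((2:ℕ) : ℤ) by norm_num, _root_.zpow_neg, zpow_natCast]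
    exact inv_eq_of_mul_eq_one_right h
  have hcos : goldenφ⁻¹ = 2 * Real.cos (2 * Real.pi / 5) := by
    have h5 : Real.sqrt 5 ^ 2 = 5 := Real.sq_sqrt (by norm_num)
    rw [show 2 * Real.pi / 5 = 2 * (Real.pi/5) by ring, Real.cos_two_mul,
      Real.cos_pi_div_five, goldenφ]
    rw [inv_div, div_eq_iff (by positivity)]
    nlinarith [h5]
  have hre : ξ.re = Real.cos (2 * Real.pi / 5) := by
    rw [ξ, show 2 * (Real.pi:ℂ) * Complex.I / 5
        = ((2*Real.pi/5 : ℝ):ℂ) * Complex.I by push_cast; ring]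
    rw [Complex.exp_ofReal_mul_I_re]
  have ha : (goldenφ : ℂ)⁻¹ = ξ + ξ ^ 4 := by
    have h1 : ξ + ξ ^ 4 = ((2 * ξ.re : ℝ) : ℂ) := by
      rw [← hconj4, Complex.add_conj]
    rw [h1, hre, ← hcos, ← Complex.ofReal_inv]
  have hφpos : (0:ℝ) < goldenφ := by rw [goldenφ]; positivity
  have hs2 : (((Real.sqrt goldenφ⁻¹ : ℝ)) : ℂ) ^ 2 = ξ + ξ ^ 4 := by
    rw [← Complex.ofReal_pow, Real.sq_sqrt (by positivity), Complex.ofReal_inv, ha]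
  have hreal : goldenφ⁻¹ ^ 2 + goldenφ⁻¹ = 1 := by
    have h5 : Real.sqrt 5 ^ 2 = 5 := Real.sq_sqrt (by norm_num)
    have hp : (0:ℝ) < 1 + Real.sqrt 5 := by positivity
    rw [goldenφ, inv_div]
    field_simp
    nlinarith [h5]
  have haq : (ξ + ξ ^ 4) ^ 2 + (ξ + ξ ^ 4) = 1 := by
    have h := congrArg (fun r : ℝ => (r : ℂ)) hreal
    push_cast at h
    rw [← ha]
    exact h
  have h5s : ξ ^ 4 + ξ ^ 3 + ξ ^ 2 + ξ + 1 = 0 := by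
    linear_combination haq - (2 + ξ ^ 3) * hx5
  set s : ℂ := ((Real.sqrt goldenφ⁻¹ : ℝ) : ℂ) with hs
  have hsc : star s = s := by rw [hs]; exact Complex.conj_ofReal _
  have e1 : rho1 = !![ξ ^ 3, 0; 0, -ξ ^ 4] := by rw [rho1, hm2, hm1]
  have e2 : rho2 = !![(ξ + ξ ^ 4) * ξ ^ 2, -s * ξ; -s * ξ, -(ξ + ξ ^ 4)] := by
    rw [rho2, ha]
  have eF : Fmat = !![ξ + ξ ^ 4, s; s, -(ξ + ξ ^ 4)] := by
    rw [Fmat, ha]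
  refine ⟨?_, ?_, ?_, ?_⟩
  · rw [Matrix.mem_unitaryGroup_iff, e1, star_fin_two, Matrix.mul_fin_two]
    ext i j
    fin_cases i <;> fin_cases j <;>
      simp [Complex.star_def, hconj4, Matrix.one_apply]
    · linear_combination (1 + ξ^5 + ξ^10) * hx5
    · linear_combination (1 + ξ^5 + ξ^10 + ξ^15) * hx5
  · rw [Matrix.mem_unitaryGroup_iff, e2, star_fin_two, Matrix.mul_fin_two]
    ext i j
    fin_cases i <;> fin_cases j <;>
      simp [Complex.star_def, hconj4, hsc, Matrix.one_apply]
    · linear_combination (2 + ξ + ξ^2 + ξ^3 + ξ^4 + 2*ξ^5 + ξ^7 + ξ^8 + 2*ξ^10 + ξ^12 + ξ^13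
        + ξ^15 + ξ^17 + ξ^20 + ξ^22 + ξ^25) * hx5 + ξ^5 * hs2 + h5s
    · linear_combination (-ξ^5*s + ξ^7*s + ξ^12*s) * hx5
    · linear_combination (-(ξ^5*s) - ξ^8*s - ξ^10*s - ξ^15*s - ξ^20*s) * hx5
    · linear_combination (2 + ξ + ξ^2 + ξ^3 + ξ^4 + ξ^5 + ξ^7 + ξ^10 + ξ^12 + ξ^15) * hx5
        + ξ^5 * hs2 + h5s
  · rw [e1, e2, Matrix.mul_fin_two, Matrix.mul_fin_two, Matrix.mul_fin_two, Matrix.mul_fin_two]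
    ext i j
    fin_cases i <;> fin_cases j <;> simp
    · linear_combination (-(ξ^7) - ξ^10) * hx5 + ξ^6 * hs2
    · linear_combination (s + s*ξ + s*ξ^2 + s*ξ^3 + s*ξ^4 + s*ξ^5) * hx5 + s * h5s
    · linear_combination (s + s*ξ + s*ξ^2 + s*ξ^3 + s*ξ^4 + s*ξ^5) * hx5 + s * h5s
    · linear_combination (-(ξ^5)) * hs2
  · rw [e1, e2, eF, Matrix.mul_fin_two, Matrix.mul_fin_two]
    ext i j
    fin_cases i <;> fin_cases j <;> simp
    · linear_combination (-(ξ^3) - ξ^6) * hx5 + ξ^4 * hs2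
    · linear_combination (-s - ξ^2*s - ξ^3*s) * hx5 + (-s) * h5s
    · linear_combination (-s - ξ^2*s - ξ^3*s) * hx5 + (-s) * h5s
    · linear_combination (ξ + 2*ξ^4 + ξ^7) * hx5 + (-(ξ^3)) * hs2
end

section
/- Let n ≥ 1. Call an n×n complex matrix M 2-level if there exist indices i, j such that M agrees with the identity matrix at every entry (k, l) with k ∉ {i, j} or l ∉ {i, j} (i.e. M is the identity outside the 2×2 block on rows and columns i, j). Then every n×n unitary complex matrix U can be written as a finite product U = M₁·M₂·⋯·M_r where each M_r is a 2-level unitary matrix. -/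
open Matrix Complex

def TwoLevel {n : ℕ} (M : Matrix (Fin n) (Fin n) ℂ) : Prop :=
  ∃ i j : Fin n, ∀ k l : Fin n,
    ((k ≠ i ∧ k ≠ j) ∨ (l ≠ i ∧ l ≠ j)) →
      M k l = (1 : Matrix (Fin n) (Fin n) ℂ) k l

namespace TL

lemma sum_pair' {n : ℕ} {i j : Fin n} (hij : i ≠ j) (f : Fin n → ℂ)
    (hf : ∀ k, k ≠ i → k ≠ j → f k = 0) : ∑ k, f k = f i + f j := by
  rw [← Finset.sum_subset (Finset.subset_univ ({i, j} : Finset (Fin n)))]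
  · exact Finset.sum_pair hij
  · intro k _ hk
    simp only [Finset.mem_insert, Finset.mem_singleton, not_or] at hk
    exact hf k hk.1 hk.2

/-- Embed a 2×2 matrix at rows/columns `i, j` of the identity. -/
def emb {n : ℕ} (i j : Fin n) (A : Matrix (Fin 2) (Fin 2) ℂ) : Matrix (Fin n) (Fin n) ℂ :=
  Matrix.of fun k l =>
    if k = i then (if l = i then A 0 0 else if l = j then A 0 1 else 0)
    else if k = j then (if l = i then A 1 0 else if l = j then A 1 1 else 0)
    else if k = l then 1 else 0

lemma emb_twoLevel {n : ℕ} (i j : Fin n) (A : Matrix (Fin 2) (Fin 2) ℂ) :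
    TwoLevel (emb i j A) := by
  refine ⟨i, j, fun k l h => ?_⟩
  rcases h with ⟨hki, hkj⟩ | ⟨hli, hlj⟩
  · simp [emb, hki, hkj, one_apply]
  · rcases eq_or_ne i k with rfl | hki
    · simp [emb, Ne.symm hli, Ne.symm hlj, hli, hlj, one_apply]
    · rcases eq_or_ne j k with rfl | hkj
      · simp [emb, Ne.symm hli, Ne.symm hlj, hli, hlj, one_apply, Ne.symm hki]
      · simp [emb, Ne.symm hki, Ne.symm hkj, one_apply]

lemma emb_mul {n : ℕ} {i j : Fin n} (hij : i ≠ j) (A B : Matrix (Fin 2) (Fin 2) ℂ) :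
    emb i j A * emb i j B = emb i j (A * B) := by
  ext k l
  rw [mul_apply]
  rcases eq_or_ne i k with rfl | hki
  · rw [sum_pair' hij _ (fun p hpi hpj => by simp [emb, hpi, hpj, Ne.symm hpi, Ne.symm hpj])]
    rcases eq_or_ne i l with rfl | hli
    · simp [emb, hij, Ne.symm hij, mul_apply, Fin.sum_univ_two]
    · rcases eq_or_ne j l with rfl | hlj
      · simp [emb, hij, Ne.symm hij, mul_apply, Fin.sum_univ_two]
      · simp [emb, hij, Ne.symm hij, Ne.symm hli, Ne.symm hlj]
  · rcases eq_or_ne j k with rfl | hkj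
    · rw [sum_pair' hij _ (fun p hpi hpj => by
        simp [emb, hpi, hpj, Ne.symm hpi, Ne.symm hpj, Ne.symm hki])]
      rcases eq_or_ne i l with rfl | hli
      · simp [emb, hij, Ne.symm hij, Ne.symm hki, mul_apply, Fin.sum_univ_two]
      · rcases eq_or_ne j l with rfl | hlj
        · simp [emb, hij, Ne.symm hij, Ne.symm hki, mul_apply, Fin.sum_univ_two]
        · simp [emb, hij, Ne.symm hij, Ne.symm hki, Ne.symm hli, Ne.symm hlj]
    · rw [Finset.sum_eq_single k
        (fun p _ hpk => by simp [emb, Ne.symm hki, Ne.symm hkj, Ne.symm hpk])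
        (fun h => absurd (Finset.mem_univ k) h)]
      simp [emb, Ne.symm hki, Ne.symm hkj]

lemma emb_one {n : ℕ} {i j : Fin n} (hij : i ≠ j) : emb i j 1 = 1 := by
  ext k l
  rcases eq_or_ne i k with rfl | hki
  · rcases eq_or_ne i l with rfl | hli
    · simp [emb]
    · simp [emb, hij, Ne.symm hij, Ne.symm hli, one_apply, hli]
  · rcases eq_or_ne j k with rfl | hkj
    · rcases eq_or_ne j l with rfl | hlj
      · simp [emb, hij, Ne.symm hij]
      · simp [emb, hij, Ne.symm hij, Ne.symm hki, Ne.symm hlj, one_apply, hlj]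
    · simp [emb, Ne.symm hki, Ne.symm hkj, one_apply]

lemma emb_star {n : ℕ} {i j : Fin n} (hij : i ≠ j) (A : Matrix (Fin 2) (Fin 2) ℂ) :
    star (emb i j A) = emb i j (star A) := by
  ext k l
  rw [Matrix.star_apply]
  have hc : ∀ (c : Prop) [Decidable c] (x : ℂ),
      (starRingEnd ℂ) (if c then x else 0) = if c then (starRingEnd ℂ) x else 0 := by
    intro c _ x; split <;> simp
  rcases eq_or_ne i k with rfl | hki
  · rcases eq_or_ne i l with rfl | hli
    · simp [emb, conjTranspose_apply]
    · rcases eq_or_ne j l with rfl | hlj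
      · simp [emb, conjTranspose_apply, hij, Ne.symm hij]
      · simp [emb, conjTranspose_apply, hij, Ne.symm hij, hli, hlj, Ne.symm hli, Ne.symm hlj]
  · rcases eq_or_ne j k with rfl | hkj
    · rcases eq_or_ne i l with rfl | hli
      · simp [emb, conjTranspose_apply, hij, Ne.symm hij, Ne.symm hki]
      · rcases eq_or_ne j l with rfl | hlj
        · simp [emb, conjTranspose_apply, hij, Ne.symm hij, Ne.symm hki]
        · simp [emb, conjTranspose_apply, hij, Ne.symm hij, Ne.symm hki, hli, hlj,
            Ne.symm hli, Ne.symm hlj]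
    · rcases eq_or_ne i l with rfl | hli
      · simp [emb, conjTranspose_apply, Ne.symm hki, Ne.symm hkj, hki, hkj]
      · rcases eq_or_ne j l with rfl | hlj
        · simp [emb, conjTranspose_apply, Ne.symm hki, Ne.symm hkj, hki, hkj]
        · rcases eq_or_ne k l with rfl | hkl
          · simp [emb, Ne.symm hki, Ne.symm hkj]
          · simp [emb, Ne.symm hki, Ne.symm hkj, Ne.symm hli, Ne.symm hlj, hkl, Ne.symm hkl]

lemma emb_unitary {n : ℕ} {i j : Fin n} (hij : i ≠ j) {A : Matrix (Fin 2) (Fin 2) ℂ}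
    (hA : A ∈ Matrix.unitaryGroup (Fin 2) ℂ) :
    emb i j A ∈ Matrix.unitaryGroup (Fin n) ℂ := by
  rw [Matrix.mem_unitaryGroup_iff']
  rw [emb_star hij, emb_mul hij, (Matrix.mem_unitaryGroup_iff'.mp hA : star A * A = 1), emb_one hij]

lemma emb_mul_apply {n : ℕ} {i j : Fin n} (hij : i ≠ j) (A : Matrix (Fin 2) (Fin 2) ℂ)
    (V : Matrix (Fin n) (Fin n) ℂ) (l : Fin n) :
    (emb i j A * V) i l = A 0 0 * V i l + A 0 1 * V j l ∧
    (emb i j A * V) j l = A 1 0 * V i l + A 1 1 * V j l := by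
  constructor
  · rw [mul_apply, sum_pair' hij _ (fun p hpi hpj => by simp [emb, hpi, hpj, Ne.symm hpi, Ne.symm hpj])]
    simp [emb, hij, Ne.symm hij]
  · rw [mul_apply, sum_pair' hij _ (fun p hpi hpj => by
      simp [emb, hpi, hpj, Ne.symm hpi, Ne.symm hpj, hij, Ne.symm hij])]
    simp [emb, hij, Ne.symm hij]

lemma emb_mul_apply_other {n : ℕ} {i j k : Fin n} (hki : k ≠ i) (hkj : k ≠ j)
    (A : Matrix (Fin 2) (Fin 2) ℂ) (V : Matrix (Fin n) (Fin n) ℂ) (l : Fin n) :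
    (emb i j A * V) k l = V k l := by
  rw [mul_apply, Finset.sum_eq_single k (fun p _ hpk => by simp [emb, hki, hkj, Ne.symm hpk])
    (fun h => absurd (Finset.mem_univ k) h)]
  simp [emb, hki, hkj]

noncomputable def giv (a b : ℂ) : Matrix (Fin 2) (Fin 2) ℂ :=
  Matrix.of ![![(starRingEnd ℂ) a / (Real.sqrt (normSq a + normSq b) : ℂ),
               (starRingEnd ℂ) b / (Real.sqrt (normSq a + normSq b) : ℂ)],
             ![-b / (Real.sqrt (normSq a + normSq b) : ℂ),
               a / (Real.sqrt (normSq a + normSq b) : ℂ)]]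

lemma giv_unitary {a b : ℂ} (hb : b ≠ 0) : giv a b ∈ Matrix.unitaryGroup (Fin 2) ℂ := by
  have hpos : 0 < normSq a + normSq b := by
    have := normSq_pos.mpr hb
    have := normSq_nonneg a
    linarith
  have hr0 : 0 < Real.sqrt (normSq a + normSq b) := Real.sqrt_pos.mpr hpos
  have hr : ((Real.sqrt (normSq a + normSq b) : ℝ) : ℂ) ≠ 0 := by exact_mod_cast hr0.ne'
  have hrr : a * (starRingEnd ℂ) a + b * (starRingEnd ℂ) b =
      ((Real.sqrt (normSq a + normSq b) : ℝ) : ℂ) * ((Real.sqrt (normSq a + normSq b) : ℝ) : ℂ) := by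
    rw [mul_conj, mul_conj]
    rw [← ofReal_mul]
    rw [Real.mul_self_sqrt hpos.le]
    push_cast
    ring
  rw [Matrix.mem_unitaryGroup_iff']
  ext p q
  fin_cases p <;> fin_cases q <;>
    simp [giv, mul_apply, Fin.sum_univ_two, conjTranspose_apply, one_apply, map_div₀,
      Complex.conj_ofReal] <;>
    field_simp <;>
    first
      | linear_combination hrr
      | linear_combination -hrr
      | linear_combination (2:ℂ) * hrr
      | linear_combination (-2:ℂ) * hrr
      | ring


lemma giv_cancel (a b : ℂ) : giv a b 1 0 * a + giv a b 1 1 * b = 0 := by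
  simp [giv]
  ring

lemma reduce {m : ℕ} : ∀ (t : ℕ) (V : Matrix (Fin (m+1)) (Fin (m+1)) ℂ),
    (∀ k : Fin (m+1), t < (k : ℕ) → V k 0 = 0) →
    ∃ L : List (Matrix (Fin (m+1)) (Fin (m+1)) ℂ),
      (∀ M ∈ L, TwoLevel M ∧ M ∈ Matrix.unitaryGroup (Fin (m+1)) ℂ) ∧
      ∀ k : Fin (m+1), k ≠ 0 → (L.prod * V) k 0 = 0 := by
  intro t
  induction t with
  | zero =>
    intro V h
    refine ⟨[], by simp, fun k hk => ?_⟩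
    simpa using h k (by
      rcases Nat.eq_zero_or_pos (k : ℕ) with h0 | h0
      · exact absurd (Fin.ext h0) hk
      · exact h0)
  | succ t ih =>
    intro V h
    by_cases hm : t + 1 ≤ m
    · have hilt : t + 1 < m + 1 := by omega
      set i : Fin (m+1) := ⟨t+1, hilt⟩ with hidef
      have hi0 : (0 : Fin (m+1)) ≠ i := by
        intro hc
        have := congrArg Fin.val hc
        simp [hidef] at this
      by_cases hb : V i 0 = 0
      · refine ih V (fun k hk => ?_)
        rcases eq_or_ne k i with rfl | hki
        · exact hb
        · refine h k ?_
          have : (k : ℕ) ≠ t + 1 := fun hc => hki (Fin.ext (by simp [hidef, hc]))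
          omega
      · set G := emb 0 i (giv (V 0 0) (V i 0)) with hGdef
        have hzero : ∀ k : Fin (m+1), t < (k : ℕ) → (G * V) k 0 = 0 := by
          intro k hk
          rcases eq_or_ne k i with rfl | hki
          · rw [hGdef]
            rw [(emb_mul_apply hi0 (giv (V 0 0) (V i 0)) V 0).2]
            exact giv_cancel (V 0 0) (V i 0)
          · have hk0 : k ≠ 0 := by
              intro hc; subst hc; simp at hk
            rw [hGdef, emb_mul_apply_other hk0 hki]
            refine h k ?_
            have : (k : ℕ) ≠ t + 1 := fun hc => hki (Fin.ext (by simp [hidef, hc]))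
            omega
        obtain ⟨L, hL, hcol⟩ := ih (G * V) hzero
        refine ⟨L ++ [G], ?_, ?_⟩
        · intro M hM
          rcases List.mem_append.mp hM with hM | hM
          · exact hL M hM
          · rw [List.mem_singleton] at hM
            subst hM
            exact ⟨emb_twoLevel _ _ _, emb_unitary hi0 (giv_unitary hb)⟩
        · intro k hk
          rw [List.prod_append, List.prod_cons, List.prod_nil, mul_one, mul_assoc]
          exact hcol k hk
    · refine ih V (fun k hk => ?_)
      have := k.isLt
      omega


/-- Embed an `m × m` matrix as the lower-right block of an `(m+1) × (m+1)` matrix,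
with a `1` in the top-left corner. -/
def lift {m : ℕ} (M : Matrix (Fin m) (Fin m) ℂ) : Matrix (Fin (m+1)) (Fin (m+1)) ℂ :=
  Matrix.of fun k l =>
    if hk : k = 0 then (if l = 0 then 1 else 0)
    else if hl : l = 0 then 0 else M (k.pred hk) (l.pred hl)

@[simp] lemma lift_zero_zero {m : ℕ} (M : Matrix (Fin m) (Fin m) ℂ) : lift M 0 0 = 1 := by
  simp [lift]

@[simp] lemma lift_zero_succ {m : ℕ} (M : Matrix (Fin m) (Fin m) ℂ) (l : Fin m) :
    lift M 0 l.succ = 0 := by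
  simp [lift, Fin.succ_ne_zero]

@[simp] lemma lift_succ_zero {m : ℕ} (M : Matrix (Fin m) (Fin m) ℂ) (k : Fin m) :
    lift M k.succ 0 = 0 := by
  simp [lift, Fin.succ_ne_zero]

@[simp] lemma lift_succ_succ {m : ℕ} (M : Matrix (Fin m) (Fin m) ℂ) (k l : Fin m) :
    lift M k.succ l.succ = M k l := by
  simp [lift, Fin.succ_ne_zero]

lemma lift_mul {m : ℕ} (M N : Matrix (Fin m) (Fin m) ℂ) :
    lift (M * N) = lift M * lift N := by
  ext k l
  rcases Fin.eq_zero_or_eq_succ k with rfl | ⟨k, rfl⟩ <;>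
    rcases Fin.eq_zero_or_eq_succ l with rfl | ⟨l, rfl⟩ <;>
    simp [mul_apply, Fin.sum_univ_succ]

lemma lift_one {m : ℕ} : lift (1 : Matrix (Fin m) (Fin m) ℂ) = 1 := by
  ext k l
  rcases Fin.eq_zero_or_eq_succ k with rfl | ⟨k, rfl⟩ <;>
    rcases Fin.eq_zero_or_eq_succ l with rfl | ⟨l, rfl⟩ <;>
    simp [one_apply, Fin.succ_ne_zero, (Fin.succ_ne_zero _).symm, Fin.succ_inj]

lemma lift_star {m : ℕ} (M : Matrix (Fin m) (Fin m) ℂ) : star (lift M) = lift (star M) := by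
  ext k l
  rw [Matrix.star_apply]
  rcases Fin.eq_zero_or_eq_succ k with rfl | ⟨k, rfl⟩ <;>
    rcases Fin.eq_zero_or_eq_succ l with rfl | ⟨l, rfl⟩ <;>
    simp [Matrix.star_apply]

lemma lift_prod {m : ℕ} (L : List (Matrix (Fin m) (Fin m) ℂ)) :
    lift L.prod = (L.map lift).prod := by
  induction L with
  | nil => simpa using lift_one
  | cons M T ihT => rw [List.prod_cons, lift_mul, ihT, List.map_cons, List.prod_cons]

lemma lift_unitary {m : ℕ} {M : Matrix (Fin m) (Fin m) ℂ}
    (hM : M ∈ Matrix.unitaryGroup (Fin m) ℂ) :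
    lift M ∈ Matrix.unitaryGroup (Fin (m+1)) ℂ := by
  rw [Matrix.mem_unitaryGroup_iff']
  rw [lift_star, ← lift_mul, (Matrix.mem_unitaryGroup_iff'.mp hM : star M * M = 1), lift_one]

lemma lift_twoLevel {m : ℕ} {M : Matrix (Fin m) (Fin m) ℂ} (hM : TwoLevel M) :
    TwoLevel (lift M) := by
  obtain ⟨i, j, hij⟩ := hM
  refine ⟨i.succ, j.succ, fun k l h => ?_⟩
  rcases Fin.eq_zero_or_eq_succ k with rfl | ⟨k, rfl⟩ <;>
    rcases Fin.eq_zero_or_eq_succ l with rfl | ⟨l, rfl⟩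
  · simp [one_apply]
  · simp [one_apply, (Fin.succ_ne_zero _).symm]
  · simp [one_apply, Fin.succ_ne_zero]
  · have h' : (k ≠ i ∧ k ≠ j) ∨ (l ≠ i ∧ l ≠ j) := by
      rcases h with ⟨h1, h2⟩ | ⟨h1, h2⟩
      · exact Or.inl ⟨fun hc => h1 (by rw [hc]), fun hc => h2 (by rw [hc])⟩
      · exact Or.inr ⟨fun hc => h1 (by rw [hc]), fun hc => h2 (by rw [hc])⟩
    rw [lift_succ_succ, hij k l h']
    simp [one_apply, Fin.succ_inj]

lemma star_twoLevel {n : ℕ} {M : Matrix (Fin n) (Fin n) ℂ} (hM : TwoLevel M) :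
    TwoLevel (star M) := by
  obtain ⟨i, j, hij⟩ := hM
  refine ⟨i, j, fun k l h => ?_⟩
  rw [Matrix.star_apply, hij l k h.symm]
  rcases eq_or_ne k l with rfl | hkl
  · simp [one_apply]
  · simp [one_apply, hkl, Ne.symm hkl]

lemma star_list_prod {n : ℕ} (L : List (Matrix (Fin n) (Fin n) ℂ)) :
    star L.prod = (L.reverse.map star).prod := by
  induction L with
  | nil => simp
  | cons M T ihT =>
    rw [List.prod_cons, Matrix.star_mul, ihT, List.reverse_cons, List.map_append, List.prod_append]
    simp

lemma key : ∀ (n : ℕ) (U : Matrix (Fin n) (Fin n) ℂ), U ∈ Matrix.unitaryGroup (Fin n) ℂ →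
    ∃ L : List (Matrix (Fin n) (Fin n) ℂ),
      (∀ M ∈ L, TwoLevel M ∧ M ∈ Matrix.unitaryGroup (Fin n) ℂ) ∧ U = L.prod := by
  intro n
  induction n with
  | zero =>
    intro U _
    exact ⟨[], by simp, by ext k; exact k.elim0⟩
  | succ m ih =>
    intro U hU
    obtain ⟨L₀, hL₀, hcol⟩ := reduce m U (fun k hk => absurd k.isLt (by omega))
    set P := L₀.prod with hP
    have hPu : P ∈ Matrix.unitaryGroup (Fin (m+1)) ℂ :=
      Submonoid.list_prod_mem _ (fun x hx => (hL₀ x hx).2)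
    set W := P * U with hWdef
    have hWu : W ∈ Matrix.unitaryGroup (Fin (m+1)) ℂ := mul_mem hPu hU
    have hc : star (W 0 0) * W 0 0 = 1 := by
      have h1 := Matrix.mem_unitaryGroup_iff'.mp hWu
      have h2 := congrFun (congrFun h1 0) 0
      rw [mul_apply, Finset.sum_eq_single 0
        (fun p _ hp => by simp [Matrix.star_apply, hcol p hp])
        (fun hh => absurd (Finset.mem_univ _) hh)] at h2
      rw [Matrix.star_apply] at h2
      rw [h2, one_apply_eq]
    set D : Matrix (Fin (m+1)) (Fin (m+1)) ℂ :=
      Matrix.diagonal (fun k => if k = 0 then star (W 0 0) else 1) with hDdef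
    have hDu : D ∈ Matrix.unitaryGroup (Fin (m+1)) ℂ := by
      rw [Matrix.mem_unitaryGroup_iff']
      rw [hDdef, Matrix.star_eq_conjTranspose, Matrix.diagonal_conjTranspose,
        Matrix.diagonal_mul_diagonal]
      ext k l
      rcases eq_or_ne k l with rfl | hkl
      · rw [Matrix.diagonal_apply_eq, one_apply_eq]
        rcases eq_or_ne k 0 with rfl | hk
        · simpa [mul_comm] using hc
        · simp [hk]
      · rw [Matrix.diagonal_apply_ne _ hkl, one_apply_ne hkl]
    have hDtwo : TwoLevel D := by
      refine ⟨0, 0, fun k l h => ?_⟩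
      rcases eq_or_ne k l with rfl | hkl
      · rcases h with ⟨h1, _⟩ | ⟨h1, _⟩ <;> simp [hDdef, Matrix.diagonal_apply_eq, h1, one_apply]
      · simp [hDdef, Matrix.diagonal_apply_ne _ hkl, one_apply, hkl]
    set X := D * W with hXdef
    have hXu : X ∈ Matrix.unitaryGroup (Fin (m+1)) ℂ := mul_mem hDu hWu
    have hXcol : ∀ k : Fin (m+1), k ≠ 0 → X k 0 = 0 := by
      intro k hk
      rw [hXdef, hDdef, Matrix.diagonal_mul, hcol k hk, mul_zero]
    have hX00 : X 0 0 = 1 := by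
      rw [hXdef, hDdef, Matrix.diagonal_mul]
      simpa using hc
    have hXrow : ∀ l : Fin (m+1), l ≠ 0 → X 0 l = 0 := by
      have h1 := Matrix.mem_unitaryGroup_iff.mp hXu
      have h2 := congrFun (congrFun h1 0) 0
      rw [mul_apply] at h2
      have h3 : ∀ l : Fin (m+1), X 0 l * star (X 0 l) = (normSq (X 0 l) : ℂ) := fun l => by
        rw [RCLike.star_def, Complex.mul_conj]
      simp only [Matrix.star_apply, Matrix.conjTranspose_apply] at h2
      rw [Finset.sum_congr rfl (fun l _ => h3 l)] at h2
      rw [one_apply_eq] at h2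
      have h4 : ∑ l, normSq (X 0 l) = 1 := by
        have := h2
        rw [← Complex.ofReal_sum] at this
        exact_mod_cast this
      have h5 : ∑ l ∈ Finset.univ.erase 0, normSq (X 0 l) = 0 := by
        have h6 := Finset.add_sum_erase Finset.univ (fun l => normSq (X 0 l))
          (Finset.mem_univ (0 : Fin (m+1)))
        rw [h4] at h6
        have h7 : normSq (X 0 0) = 1 := by rw [hX00]; simp
        linarith [h6, h7]
      intro l hl
      have h8 := (Finset.sum_eq_zero_iff_of_nonneg
        (fun x _ => normSq_nonneg (X 0 x))).mp h5 l
        (Finset.mem_erase.mpr ⟨hl, Finset.mem_univ l⟩)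
      exact normSq_eq_zero.mp h8
    set W' : Matrix (Fin m) (Fin m) ℂ := Matrix.of (fun k l => X k.succ l.succ) with hW'def
    have hW'u : W' ∈ Matrix.unitaryGroup (Fin m) ℂ := by
      rw [Matrix.mem_unitaryGroup_iff']
      ext k l
      have h1 := congrFun (congrFun (Matrix.mem_unitaryGroup_iff'.mp hXu) k.succ) l.succ
      rw [mul_apply, Fin.sum_univ_succ] at h1
      simp only [Matrix.star_apply] at h1
      rw [hXrow k.succ (Fin.succ_ne_zero k)] at h1
      simp only [star_zero, zero_mul, zero_add] at h1
      rw [mul_apply]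
      calc ∑ p, star W' k p * W' p l
          = ∑ p : Fin m, star (X p.succ k.succ) * X p.succ l.succ := by
            simp only [Matrix.star_apply]
            rfl
        _ = (1 : Matrix (Fin (m+1)) (Fin (m+1)) ℂ) k.succ l.succ := h1
        _ = (1 : Matrix (Fin m) (Fin m) ℂ) k l := by
            simp [one_apply, Fin.succ_inj]
    obtain ⟨L', hL', hW'⟩ := ih W' hW'u
    have hXlift : X = lift W' := by
      ext k l
      rcases Fin.eq_zero_or_eq_succ k with rfl | ⟨k, rfl⟩ <;>
        rcases Fin.eq_zero_or_eq_succ l with rfl | ⟨l, rfl⟩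
      · rw [hX00, lift_zero_zero]
      · rw [hXrow l.succ (Fin.succ_ne_zero l), lift_zero_succ]
      · rw [hXcol k.succ (Fin.succ_ne_zero k), lift_succ_zero]
      · rw [lift_succ_succ]; rfl
    refine ⟨L₀.reverse.map star ++ star D :: L'.map lift, ?_, ?_⟩
    · intro M hM
      rcases List.mem_append.mp hM with hM | hM
      · rw [List.mem_map] at hM
        obtain ⟨N, hN, rfl⟩ := hM
        have hN' := hL₀ N (List.mem_reverse.mp hN)
        exact ⟨star_twoLevel hN'.1, Unitary.star_mem hN'.2⟩
      · rcases List.mem_cons.mp hM with rfl | hM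
        · exact ⟨star_twoLevel hDtwo, Unitary.star_mem hDu⟩
        · rw [List.mem_map] at hM
          obtain ⟨N, hN, rfl⟩ := hM
          exact ⟨lift_twoLevel (hL' N hN).1, lift_unitary (hL' N hN).2⟩
    · rw [List.prod_append, List.prod_cons, ← star_list_prod, ← lift_prod, ← hW', ← hXlift,
        hXdef, ← mul_assoc (star D), (Matrix.mem_unitaryGroup_iff'.mp hDu : star D * D = 1),
        one_mul, hWdef, ← mul_assoc, (Matrix.mem_unitaryGroup_iff'.mp hPu : star P * P = 1),
        one_mul]

end TL

/-- Every unitary matrix is a finite product of `2`-level unitary matrices. -/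
theorem unitary_eq_prod_two_level (n : ℕ) (hn : 1 ≤ n)
    (U : Matrix (Fin n) (Fin n) ℂ) (hU : U ∈ Matrix.unitaryGroup (Fin n) ℂ) :
    ∃ L : List (Matrix (Fin n) (Fin n) ℂ),
      (∀ M ∈ L, TwoLevel M ∧ M ∈ Matrix.unitaryGroup (Fin n) ℂ) ∧
      U = L.prod := TL.key n U hU
end

section
/- There do not exist a natural number d and functions a, b: ℕ → ℕ such that for all n ≥ 2: (i) a(n) ≥ 1 and b(n) ≥ 1; (ii) a(n) = b(n+1) and b(n) = a(n+1) + b(n+1) (i.e. (a(n), b(n))ᵀ = G·(a(n+1), b(n+1))ᵀ with G = [[0,1],[1,1]]); and (iii) dⁿ = a(n)·F_{n−1} + b(n)·F_n, where F denotes the Fibonacci numbers with F₁ = F₂ = 1 (Nat.fib). Consequently no finite-dimensional vector space W and Yang–Baxter operator R on W ⊗ W can localize the Fibonacci sequence of braid group representations: there is no dimension d with W^{⊗n} ≅ a(n)·V_{1,n} ⊕ b(n)·V_{τ,n} as B_n-modules for all n. -/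
/-- The arithmetic impossibility of localizing the Fibonacci braid group
representations: there is no dimension `d` together with positive multiplicities
`a n`, `b n` (of the simple modules `V_{1,n}`, `V_{τ,n}`, of dimensions `F_{n-1}`
and `F_n`) satisfying the restriction recursion given by the inclusion matrix
`G = [[0,1],[1,1]]` and the dimension count `dⁿ = a n · F_{n-1} + b n · F_n`
for all `n ≥ 2`. -/
theorem fibonacci_not_localizable :
    ¬ ∃ (d : ℕ) (a b : ℕ → ℕ), ∀ n : ℕ, 2 ≤ n →
      (1 ≤ a n ∧ 1 ≤ b n) ∧
      (a n = b (n + 1) ∧ b n = a (n + 1) + b (n + 1)) ∧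
      d ^ n = a n * Nat.fib (n - 1) + b n * Nat.fib n := by
  rintro ⟨d, a, b, h⟩
  -- `b` is strictly decreasing on `n ≥ 2`, contradicting `b n ≥ 1`.
  have key : ∀ k, b (2 + k) + k ≤ b 2 := by
    intro k
    induction k with
    | zero => simp
    | succ k ih =>
      have h1 := h (2 + k) (by omega)
      have h2 := h (2 + k + 1) (by omega)
      have e : 2 + (k + 1) = 2 + k + 1 := rfl
      rw [e]
      omega
  have h1 := key (b 2 + 1)
  have h2 := (h (2 + (b 2 + 1)) (by omega)).1.2
  omega
end
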